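/- Let g_α(x) = B_Ξ(x) with Ξ = (diag(α) | I_d) ∈ ℝ^{d×2d} and α ∈ (0,1]^d, where B_Ξ is the Box spline on Ξ. Then g_α is admissible: g_α ≥ 0 everywhere, g_α > 0 on [-1/2,1/2)^d, and Σ_{z∈ℤ^d} g_α(x+z) = 1 for all x ∈ ℝ^d. -/

import Mathlib

open MeasureTheory

/-- The centred trapezoidal function: convolution of `𝟙_{[-1/2,1/2)}` with
`a⁻¹ 𝟙_{[-a/2,a/2)}`. -/
noncomputable def trapezoid (a : ℝ) (t : ℝ) : ℝ :=
  a⁻¹ * ∫ s in Set.Icc (-(1/2) : ℝ) (1/2),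
    Set.indicator (Set.Ico (-(a / 2)) (a / 2)) (fun _ => (1 : ℝ)) (t - s)

/-- The Box spline `B_Ξ` for `Ξ = (diag(α) | I_d)`: the tensor product of the
one-dimensional trapezoidal functions. -/
noncomputable def boxSplineDiag (d : ℕ) (α : Fin d → ℝ) (x : Fin d → ℝ) : ℝ :=
  ∏ j, trapezoid (α j) (x j)

/-- Explicit formula for the trapezoid. -/
lemma trapezoid_eq (a : ℝ) (t : ℝ) :
    trapezoid a t = a⁻¹ * max (min (1/2) (t + a/2) - max (-(1/2)) (t - a/2)) 0 := by
  unfold trapezoid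
  congr 1
  have h1 : ∀ s : ℝ, Set.indicator (Set.Ico (-(a / 2)) (a / 2)) (fun _ => (1 : ℝ)) (t - s)
      = Set.indicator (Set.Ioc (t - a/2) (t + a/2)) (fun _ => (1 : ℝ)) s := by
    intro s
    simp only [Set.indicator_apply, Set.mem_Ico, Set.mem_Ioc]
    congr 1
    rw [eq_iff_iff]
    constructor
    · rintro ⟨h1, h2⟩; exact ⟨by linarith, by linarith⟩
    · rintro ⟨h1, h2⟩; exact ⟨by linarith, by linarith⟩
  simp_rw [h1]
  rw [setIntegral_congr_set (Ioc_ae_eq_Icc (a := (-(1/2) : ℝ)) (b := (1/2 : ℝ))).symm,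
    setIntegral_indicator measurableSet_Ioc, Set.Ioc_inter_Ioc, setIntegral_const,
    Real.volume_real_Ioc, smul_eq_mul, mul_one]

lemma trapezoid_nonneg (a : ℝ) (ha : 0 < a) (t : ℝ) : 0 ≤ trapezoid a t := by
  rw [trapezoid_eq]
  exact mul_nonneg (by positivity) (le_max_right _ _)

lemma trapezoid_pos (a : ℝ) (ha : 0 < a) (t : ℝ) (h1 : -(1/2) ≤ t) (h2 : t < 1/2) :
    0 < trapezoid a t := by
  rw [trapezoid_eq]
  have h3 : max (-(1/2) : ℝ) (t - a/2) < min (1/2 : ℝ) (t + a/2) := by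
    apply max_lt <;> apply lt_min <;> linarith
  have h4 : (0 : ℝ) < min (1/2 : ℝ) (t + a/2) - max (-(1/2) : ℝ) (t - a/2) := by linarith
  exact mul_pos (by positivity) (lt_max_of_lt_left h4)

lemma trapezoid_eq_zero (a : ℝ) (ha : 0 < a) (ha1 : a ≤ 1) (t : ℝ)
    (h : t ≤ -(3/2) ∨ (3/2 : ℝ) ≤ t) : trapezoid a t = 0 := by
  rw [trapezoid_eq]
  have h0 : max (min (1/2 : ℝ) (t + a/2) - max (-(1/2) : ℝ) (t - a/2)) 0 = 0 := by
    rw [max_eq_right]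
    rcases h with h | h
    · have h1 : min (1/2 : ℝ) (t + a/2) ≤ t + a/2 := min_le_right _ _
      have h2 : (-(1/2) : ℝ) ≤ max (-(1/2) : ℝ) (t - a/2) := le_max_left _ _
      linarith
    · have h1 : min (1/2 : ℝ) (t + a/2) ≤ 1/2 := min_le_left _ _
      have h2 : (t - a/2 : ℝ) ≤ max (-(1/2) : ℝ) (t - a/2) := le_max_right _ _
      linarith
  rw [h0, mul_zero]

lemma trapezoid_zero_of_not_mem (a : ℝ) (ha : 0 < a) (ha1 : a ≤ 1) (t : ℝ) (z : ℤ)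
    (hz : z ∉ ({-⌊t + 1/2⌋ - 1, -⌊t + 1/2⌋, -⌊t + 1/2⌋ + 1} : Finset ℤ)) :
    trapezoid a (t + z) = 0 := by
  simp only [Finset.mem_insert, Finset.mem_singleton] at hz
  push_neg at hz
  have hfl := Int.floor_le (t + 1/2)
  have hfl2 := Int.lt_floor_add_one (t + 1/2)
  apply trapezoid_eq_zero a ha ha1
  have h : z ≤ -⌊t + 1/2⌋ - 2 ∨ -⌊t + 1/2⌋ + 2 ≤ z := by omega
  rcases h with h | h
  · left
    have h' : (z : ℝ) ≤ -(⌊t + 1/2⌋ : ℝ) - 2 := by exact_mod_cast h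
    linarith
  · right
    have h' : -(⌊t + 1/2⌋ : ℝ) + 2 ≤ (z : ℝ) := by exact_mod_cast h
    linarith

set_option maxHeartbeats 3200000 in
/-- The three-term partition of unity identity. -/
lemma trapezoid_tri (a s : ℝ) (ha : 0 < a) (ha1 : a ≤ 1)
    (hs1 : -(1/2) ≤ s) (hs2 : s < 1/2) :
    trapezoid a (s - 1) + trapezoid a s + trapezoid a (s + 1) = 1 := by
  rw [trapezoid_eq, trapezoid_eq, trapezoid_eq, ← mul_add, ← mul_add]
  have e1 : min (1/2 : ℝ) (s - 1 + a/2) = s - 1 + a/2 := min_eq_right (by linarith)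
  have e2 : max (-(1/2) : ℝ) (s - 1 - a/2) = -(1/2) := max_eq_left (by linarith)
  have e3 : min (1/2 : ℝ) (s + 1 + a/2) = 1/2 := min_eq_left (by linarith)
  have e4 : max (-(1/2) : ℝ) (s + 1 - a/2) = s + 1 - a/2 := max_eq_right (by linarith)
  rw [e1, e2, e3, e4]
  have key : max (s - 1 + a/2 - -(1/2)) 0
      + max (min (1/2 : ℝ) (s + a/2) - max (-(1/2) : ℝ) (s - a/2)) 0
      + max (1/2 - (s + 1 - a/2)) 0 = a := by
    rcases le_total (s + a/2) (1/2 : ℝ) with h | h <;>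
      rcases le_total (-(1/2) : ℝ) (s - a/2) with h' | h'
    · rw [min_eq_right h, max_eq_right h']
      simp only [max_def]
      split_ifs <;> linarith
    · rw [min_eq_right h, max_eq_left h']
      simp only [max_def]
      split_ifs <;> linarith
    · rw [min_eq_left h, max_eq_right h']
      simp only [max_def]
      split_ifs <;> linarith
    · rw [min_eq_left h, max_eq_left h']
      simp only [max_def]
      split_ifs <;> linarith
  rw [key, inv_mul_cancel₀ ha.ne']

/-- One-dimensional partition of unity. -/
lemma trapezoid_hasSum (a : ℝ) (ha : 0 < a) (ha1 : a ≤ 1) (t : ℝ) :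
    HasSum (fun z : ℤ => trapezoid a (t + z)) 1 := by
  set m : ℤ := ⌊t + 1/2⌋ with hm
  have hfl := Int.floor_le (t + 1/2)
  have hfl2 := Int.lt_floor_add_one (t + 1/2)
  have hs1 : -(1/2) ≤ t - m := by rw [hm]; push_cast at hfl2 ⊢; linarith
  have hs2 : t - m < 1/2 := by rw [hm]; push_cast at hfl ⊢; linarith
  have hfin : ∀ z : ℤ, z ∉ ({-m - 1, -m, -m + 1} : Finset ℤ) →
      trapezoid a (t + z) = 0 := fun z hz => trapezoid_zero_of_not_mem a ha ha1 t z hz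
  have hsum : ∑ z ∈ ({-m - 1, -m, -m + 1} : Finset ℤ), trapezoid a (t + z) = 1 := by
    rw [Finset.sum_insert (by
        simp only [Finset.mem_insert, Finset.mem_singleton]; omega),
      Finset.sum_insert (by simp only [Finset.mem_singleton]; omega),
      Finset.sum_singleton]
    have e1 : t + ((-m - 1 : ℤ) : ℝ) = (t - m) - 1 := by push_cast; ring
    have e2 : t + ((-m : ℤ) : ℝ) = t - m := by push_cast; ring
    have e3 : t + ((-m + 1 : ℤ) : ℝ) = (t - m) + 1 := by push_cast; ring
    rw [e1, e2, e3, ← add_assoc]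
    exact trapezoid_tri a (t - m) ha ha1 hs1 hs2
  have h := hasSum_sum_of_ne_finset_zero (L := SummationFilter.unconditional _) hfin
  rwa [hsum] at h

/-- for `α ∈ (0,1]^d`, the Box spline `g_α = B_{(diag(α)|I_d)}` is
admissible: `g_α ≥ 0` everywhere, `g_α > 0` on `[-1/2,1/2)^d`, and
`Σ_{z∈ℤ^d} g_α(x+z) = 1` for all `x ∈ ℝ^d`. -/
theorem boxSpline_admissible (d : ℕ) (α : Fin d → ℝ)
    (hα : ∀ j, α j ∈ Set.Ioc (0 : ℝ) 1) :
    (∀ x : Fin d → ℝ, 0 ≤ boxSplineDiag d α x) ∧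
    (∀ x : Fin d → ℝ, (∀ i, x i ∈ Set.Ico (-(1/2) : ℝ) (1/2)) →
      0 < boxSplineDiag d α x) ∧
    (∀ x : Fin d → ℝ,
      HasSum (fun z : Fin d → ℤ => boxSplineDiag d α fun i => x i + (z i : ℝ)) 1) := by
  refine ⟨?_, ?_, ?_⟩
  · intro x
    exact Finset.prod_nonneg fun j _ => trapezoid_nonneg _ (hα j).1 _
  · intro x hx
    exact Finset.prod_pos fun j _ =>
      trapezoid_pos _ (hα j).1 _ (hx j).1 (hx j).2
  · intro x
    set S : Fin d → Finset ℤ :=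
      fun j => {-⌊x j + 1/2⌋ - 1, -⌊x j + 1/2⌋, -⌊x j + 1/2⌋ + 1} with hS
    have hfin : ∀ z : Fin d → ℤ, z ∉ Fintype.piFinset S →
        boxSplineDiag d α (fun i => x i + (z i : ℝ)) = 0 := by
      intro z hz
      rw [Fintype.mem_piFinset] at hz
      push_neg at hz
      obtain ⟨j, hj⟩ := hz
      apply Finset.prod_eq_zero (Finset.mem_univ j)
      exact trapezoid_zero_of_not_mem _ (hα j).1 (hα j).2 _ _ hj
    have hsum : ∑ z ∈ Fintype.piFinset S,
        boxSplineDiag d α (fun i => x i + (z i : ℝ)) = 1 := by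
      unfold boxSplineDiag
      have hps := Finset.prod_univ_sum (t := S)
        (f := fun j (k : ℤ) => trapezoid (α j) (x j + (k : ℝ)))
      beta_reduce
      beta_reduce at hps
      rw [← hps]
      apply Finset.prod_eq_one
      intro j _
      refine ((trapezoid_hasSum (α j) (hα j).1 (hα j).2 (x j)).unique
        (hasSum_sum_of_ne_finset_zero (s := S j) fun z hz => ?_)).symm
      exact trapezoid_zero_of_not_mem _ (hα j).1 (hα j).2 _ _ hz
    have h := hasSum_sum_of_ne_finset_zero (L := SummationFilter.unconditional _) hfin
    rwa [hsum] at h
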